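/- The set G of all functions f from the unit sphere S² ⊂ ℝ³ to ℝ satisfying f(x) + f(y) + f(z) = 0 for every orthonormal triple x, y, z ∈ S² has cardinality 2^(2^ℵ₀); in particular, it has strictly larger cardinality than the set of such functions of the form x ↦ ⟨x, W x⟩ with W a symmetric operator, which has cardinality 2^ℵ₀. -/

import Mathlib

/-! Every additive `φ : ℝ → ℝ` with `φ 1 = 0` gives a frame function `x ↦ φ (x₀²)`, since the
squared first coordinates of an orthonormal triple sum to `1`. Such `φ` are the `ℚ`-linear
functionals on `ℝ ⧸ ℚ`, a `ℚ`-vector space of dimension `𝔠`, so there are `𝔠 ^ 𝔠 = 2 ^ 𝔠` of them;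
and since `x₀²` takes every value in `[0, 1]`, which meets every coset of `ℚ`, distinct `φ` give
distinct frame functions. The quadratic frame functions are parametrized by operators, of which
there are only `𝔠`, and `c (x₀² - x₁²)` already gives `𝔠` of them. -/

open Cardinal

def GSet : Set ((Metric.sphere (0 : EuclideanSpace ℝ (Fin 3)) 1) → ℝ) :=
  {f | ∀ x y z : Metric.sphere (0 : EuclideanSpace ℝ (Fin 3)) 1,
    (inner ℝ (x : EuclideanSpace ℝ (Fin 3)) (y : EuclideanSpace ℝ (Fin 3)) : ℝ) = 0 →
    (inner ℝ (x : EuclideanSpace ℝ (Fin 3)) (z : EuclideanSpace ℝ (Fin 3)) : ℝ) = 0 →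
    (inner ℝ (y : EuclideanSpace ℝ (Fin 3)) (z : EuclideanSpace ℝ (Fin 3)) : ℝ) = 0 →
    f x + f y + f z = 0}

open Module
open scoped RealInnerProductSpace

universe u

theorem mk_le_continuum_of_finiteDimensional (V : Type) [AddCommGroup V] [Module ℝ V]
    [FiniteDimensional ℝ V] : #V ≤ 𝔠 := by
  rw [cardinalMk_eq_cardinalMk_field_pow_rank ℝ V, ← finrank_eq_rank, mk_real]
  exact power_nat_le aleph0_le_continuum

theorem mk_linearMap_eq_power_rank {K : Type*} {V W : Type u} [Field K] [AddCommGroup V]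
    [Module K V] [AddCommGroup W] [Module K W] :
    #(V →ₗ[K] W) = #W ^ Module.rank K V := by
  let b := Basis.ofVectorSpace K V
  rw [← b.mk_eq_rank'', power_def]
  exact mk_congr (b.constr K).toEquiv.symm

theorem rank_real_quotient_rat : Module.rank ℚ (ℝ ⧸ ℚ ∙ (1 : ℝ)) = 𝔠 := by
  have h := (ℚ ∙ (1 : ℝ)).rank_quotient_add_rank
  rw [Real.rank_rat_real, ← finrank_eq_rank ℚ (ℚ ∙ (1 : ℝ)), finrank_span_singleton one_ne_zero,
    Nat.cast_one, add_comm] at h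
  exact eq_of_add_eq_of_aleph0_le h (one_lt_aleph0.trans_le aleph0_le_continuum)
    aleph0_le_continuum

theorem mk_linearMap_real_quotient_rat : #((ℝ ⧸ ℚ ∙ (1 : ℝ)) →ₗ[ℚ] ℝ) = 2 ^ 𝔠 := by
  rw [mk_linearMap_eq_power_rank, rank_real_quotient_rat, mk_real,
    power_self_eq aleph0_le_continuum]

theorem quotient_mk_fract (t : ℝ) :
    (Submodule.Quotient.mk (Int.fract t) : ℝ ⧸ ℚ ∙ (1 : ℝ)) = Submodule.Quotient.mk t := by
  rw [Submodule.Quotient.eq, Submodule.mem_span_singleton]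
  exact ⟨-⌊t⌋, by rw [Int.fract, Rat.smul_def]; push_cast; ring⟩

section Frames

variable {E : Type*} [NormedAddCommGroup E] [InnerProductSpace ℝ E]

theorem orthonormal_of_mem_sphere {x y z : E} (hx : x ∈ Metric.sphere 0 1)
    (hy : y ∈ Metric.sphere 0 1) (hz : z ∈ Metric.sphere 0 1)
    (hxy : ⟪x, y⟫ = 0) (hxz : ⟪x, z⟫ = 0) (hyz : ⟪y, z⟫ = 0) :
    Orthonormal ℝ ![x, y, z] := by
  rw [mem_sphere_zero_iff_norm] at hx hy hz
  rw [orthonormal_iff_ite]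
  intro i j
  fin_cases i <;> fin_cases j <;>
    simp [hx, hy, hz, hxy, hxz, hyz, real_inner_comm x y,
      real_inner_comm x z, real_inner_comm y z]

theorem sq_inner_add_sq_inner_add_sq_inner [FiniteDimensional ℝ E] (hE : finrank ℝ E = 3)
    {x y z : E} (h : Orthonormal ℝ ![x, y, z]) (u : E) :
    ⟪u, x⟫ ^ 2 + ⟪u, y⟫ ^ 2 + ⟪u, z⟫ ^ 2 = ‖u‖ ^ 2 := by
  let b := (basisOfOrthonormalOfCardEqFinrank h (by simp [hE])).toOrthonormalBasis
    (by rwa [coe_basisOfOrthonormalOfCardEqFinrank])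
  have hb : ⇑b = ![x, y, z] := by simp [b]
  simpa [hb, Fin.sum_univ_three] using b.sum_sq_inner_left u

end Frames

local notation "E3" => EuclideanSpace ℝ (Fin 3)
local notation "S2" => Metric.sphere (0 : E3) 1

theorem sq_coord_add_sq_coord_add_sq_coord {x y z : S2} (hxy : ⟪(x : E3), y⟫ = 0)
    (hxz : ⟪(x : E3), z⟫ = 0) (hyz : ⟪(y : E3), z⟫ = 0) (i : Fin 3) :
    (x : E3) i ^ 2 + (y : E3) i ^ 2 + (z : E3) i ^ 2 = 1 := by
  simpa [EuclideanSpace.inner_single_left] using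
    sq_inner_add_sq_inner_add_sq_inner finrank_euclideanSpace_fin
      (orthonormal_of_mem_sphere x.2 y.2 z.2 hxy hxz hyz) (EuclideanSpace.single i 1)

theorem exists_mem_sphere_sq_coord_eq {s : ℝ} (h0 : 0 ≤ s) (h1 : s ≤ 1) :
    ∃ x : S2, (x : E3) 0 ^ 2 = s := by
  refine ⟨⟨!₂[√s, √(1 - s), 0], ?_⟩, by simp [Real.sq_sqrt h0]⟩
  simp [EuclideanSpace.norm_eq, Fin.sum_univ_three, Real.sq_sqrt h0,
    Real.sq_sqrt (sub_nonneg.2 h1)]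

theorem comp_sq_coord_mem_GSet (φ : ℝ →+ ℝ) (hφ : φ 1 = 0) (i : Fin 3) :
    (fun x : S2 => φ ((x : E3) i ^ 2)) ∈ GSet := by
  intro x y z hxy hxz hyz
  rw [← map_add, ← map_add, sq_coord_add_sq_coord_add_sq_coord hxy hxz hyz, hφ]

noncomputable def frameOfRealQuotientRat (ψ : (ℝ ⧸ ℚ ∙ (1 : ℝ)) →ₗ[ℚ] ℝ) : GSet :=
  ⟨fun x => ψ (Submodule.Quotient.mk ((x : E3) 0 ^ 2)),
    comp_sq_coord_mem_GSet (ψ ∘ₗ (ℚ ∙ (1 : ℝ)).mkQ).toAddMonoidHom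
      (by simp [(Submodule.Quotient.mk_eq_zero _).2 (Submodule.mem_span_singleton_self _)]) 0⟩

theorem frameOfRealQuotientRat_injective : Function.Injective frameOfRealQuotientRat := by
  intro ψ ψ' h
  ext t
  obtain ⟨x, hx⟩ := exists_mem_sphere_sq_coord_eq (Int.fract_nonneg t) (Int.fract_lt_one t).le
  simpa only [LinearMap.comp_apply, Submodule.mkQ_apply, frameOfRealQuotientRat, hx,
    quotient_mk_fract] using
    congrFun (congrArg Subtype.val h) x

theorem mk_GSet : #GSet = 2 ^ 𝔠 := by
  refine le_antisymm ?_ ?_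
  · calc #GSet ≤ #(S2 → ℝ) := mk_set_le _
      _ = 𝔠 ^ #S2 := by rw [← power_def, mk_real]
      _ ≤ 𝔠 ^ 𝔠 := power_le_power_left continuum_ne_zero
          ((mk_set_le _).trans (mk_le_continuum_of_finiteDimensional E3))
      _ = 2 ^ 𝔠 := power_self_eq aleph0_le_continuum
  · rw [← mk_linearMap_real_quotient_rat]
    exact mk_le_of_injective frameOfRealQuotientRat_injective

def quadraticFrames : Set (S2 → ℝ) :=
  {f ∈ GSet | ∃ W : E3 →ₗ[ℝ] E3, W.IsSymmetric ∧ ∀ x : S2, f x = ⟪(x : E3), W x⟫}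

open InnerProductSpace in
noncomputable def quadraticFrameOfReal (c : ℝ) : quadraticFrames := by
  let e (i : Fin 3) : E3 := EuclideanSpace.single i 1
  refine ⟨fun x => c * ((x : E3) 0 ^ 2 - (x : E3) 1 ^ 2), ?_,
    c • (rankOne ℝ (e 0) (e 0) - rankOne ℝ (e 1) (e 1) : E3 →L[ℝ] E3), ?_, fun x => ?_⟩
  · intro x y z hxy hxz hyz
    linear_combination c * (sq_coord_add_sq_coord_add_sq_coord hxy hxz hyz 0 -
      sq_coord_add_sq_coord_add_sq_coord hxy hxz hyz 1)
  · exact ((isSymmetric_rankOne_self _).sub (isSymmetric_rankOne_self _)).smul (by simp)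
  · simp [e, inner_sub_right, real_inner_smul_right, EuclideanSpace.inner_single_left,
      EuclideanSpace.inner_single_right, sq]

theorem quadraticFrameOfReal_injective : Function.Injective quadraticFrameOfReal := by
  intro c c' h
  simpa [quadraticFrameOfReal] using
    congrFun (congrArg Subtype.val h) ⟨EuclideanSpace.single 0 1, by simp⟩

theorem mk_quadraticFrames : #quadraticFrames = 𝔠 := by
  refine le_antisymm ?_ ?_
  · calc _ ≤ #(Set.range fun (W : E3 →ₗ[ℝ] E3) (x : S2) => ⟪(x : E3), W x⟫) :=
          mk_le_mk_of_subset <| by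
            rintro f ⟨-, W, -, hW⟩; exact ⟨W, funext fun x => (hW x).symm⟩
      _ ≤ #(E3 →ₗ[ℝ] E3) := mk_range_le
      _ ≤ 𝔠 := mk_le_continuum_of_finiteDimensional _
  · rw [← mk_real]
    exact mk_le_of_injective quadraticFrameOfReal_injective

/-- `G` has cardinality `2 ^ (2 ^ ℵ₀)`, strictly bigger than the set of its members of
the quadratic form `x ↦ ⟨x, W x⟩` with `W` symmetric, which has cardinality `2 ^ ℵ₀`. -/
theorem card_unbounded_frame_functions :
    Cardinal.mk GSet = (2 : Cardinal) ^ ((2 : Cardinal) ^ Cardinal.aleph0) ∧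
    Cardinal.mk {f ∈ GSet | ∃ W : EuclideanSpace ℝ (Fin 3) →ₗ[ℝ] EuclideanSpace ℝ (Fin 3),
      W.IsSymmetric ∧ ∀ x : Metric.sphere (0 : EuclideanSpace ℝ (Fin 3)) 1,
        f x = (inner ℝ (x : EuclideanSpace ℝ (Fin 3)) (W x) : ℝ)} = (2 : Cardinal) ^ Cardinal.aleph0 ∧
    ((2 : Cardinal) ^ Cardinal.aleph0) < (2 : Cardinal) ^ ((2 : Cardinal) ^ Cardinal.aleph0) := by
  rw [two_power_aleph0]
  exact ⟨mk_GSet, mk_quadraticFrames, cantor 𝔠⟩
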